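/- arXiv:1205.2020 — 3 statements merged into one kernel-verified Lean document; each statement's English description precedes it below -/
import Mathlib

section
/- Let A be a 2×2 integer matrix with entries (2 1; 1 1), with eigenvalues λ₁ = (3+√5)/2 > λ₂. Then for P = (x,y) ∈ 𝔾_m^2(ℚ̄), ĥ_A⁺(P) = (1/√5) · Σ_{v ∈ M_K} max{0, ((√5+1)/2)·log‖x‖_v + log‖y‖_v}. -/
open Filter NumberField IsDedekindDomain
open scoped Classical

noncomputable section

/-- The logarithm of the normalized absolute value of `a` at the finite place `v` of the
number field `K`:  `log ‖a‖_v = -(additive valuation of a) * log (norm of v)`. -/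
def finVal (K : Type*) [Field K] [NumberField K]
    (v : HeightOneSpectrum (𝓞 K)) (a : K) : ℝ :=
  if h : a = 0 then 0
  else (Multiplicative.toAdd (WithZero.unzero ((v.valuation K).ne_zero_iff.mpr h)) : ℤ) *
    Real.log (Ideal.absNorm v.asIdeal)

/-- The absolute logarithmic Weil height of a tuple of elements of a number field `K`:
`h(P) = Σ_{v ∈ M_K} max {0, log ‖x₁‖_v, …, log ‖x_N‖_v}` with suitably normalized
absolute values. -/
def logHeight (K : Type*) [Field K] [NumberField K] {N : ℕ} (x : Fin N → K) : ℝ :=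
  (Module.finrank ℚ K : ℝ)⁻¹ *
    ((∑ w : InfinitePlace K, (w.mult : ℝ) * ⨆ i, max 0 (Real.log (w (x i)))) +
     ∑ᶠ v : HeightOneSpectrum (𝓞 K), ⨆ i, max 0 (finVal K v (x i)))

/-- The height of a point of `𝔾_m^N(K)`. -/
def uHeight (K : Type*) [Field K] [NumberField K] {N : ℕ} (x : Fin N → Kˣ) : ℝ :=
  logHeight K (fun i => (x i : K))

/-- The monomial map associated to an integer matrix `A`:
`φ_A(x₁,…,x_N) = (∏ x_j^{a_{1j}}, …, ∏ x_j^{a_{Nj}})`. -/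
def phi {G : Type*} [CommGroup G] {N : ℕ} (A : Matrix (Fin N) (Fin N) ℤ)
    (x : Fin N → G) : Fin N → G :=
  fun i => ∏ j, (x j) ^ (A i j)

/-! The matrix `A = (2 1; 1 1)` is the square of the Fibonacci matrix, so the entries of `A^n` are
Fibonacci numbers and `A^n / λ₁^n` converges to the rank-one matrix `P = (φ^(1-i-j) / √5)`.
The height of `φ_A^n(x)` is a sum over places of `max (0, max_i (A^n ℓ_v)_i)`, where `ℓ_v` is the
vector of local logarithms of the coordinates, and only finitely many places have `ℓ_v ≠ 0`.
Hence the normalized heights converge to the same sum with `A^n` replaced by `P`, and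
`P ℓ = (√5)⁻¹ (a, φ⁻¹ a)` with `a = φ ℓ₀ + ℓ₁`, whose local term is `(√5)⁻¹ max (0, a)`. -/

open Filter Topology Matrix Real goldenRatio

section MonomialMap

variable {G : Type*} [CommGroup G] {N : ℕ}

theorem phi_one (x : Fin N → G) : phi 1 x = x := by
  funext i
  simp [phi, Matrix.one_apply]

theorem phi_phi (A B : Matrix (Fin N) (Fin N) ℤ) (x : Fin N → G) :
    phi A (phi B x) = phi (A * B) x := by
  funext i
  apply Additive.ofMul.injective
  simp only [phi, Matrix.mul_apply, ofMul_prod, ofMul_zpow, Finset.smul_sum, smul_smul,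
    Finset.sum_smul]
  rw [Finset.sum_comm]

theorem iterate_phi (A : Matrix (Fin N) (Fin N) ℤ) (n : ℕ) :
    (phi (G := G) A)^[n] = phi (A ^ n) := by
  induction n with
  | zero => funext x; exact (phi_one x).symm
  | succ n ih => funext x; rw [Function.iterate_succ_apply', ih, phi_phi, pow_succ']

theorem map_phi {R : Type*} [Ring R] (f : Additive G →+ R) (A : Matrix (Fin N) (Fin N) ℤ)
    (x : Fin N → G) :
    (fun i => f (.ofMul (phi A x i))) = A.map (Int.cast : ℤ → R) *ᵥ fun j => f (.ofMul (x j)) := by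
  funext i
  simp [phi, mulVec, dotProduct, ofMul_prod, ofMul_zpow, zsmul_eq_mul]

end MonomialMap

section LocalHeight

variable {ι : Type*}

def localHeight (ℓ : ι → ℝ) : ℝ := ⨆ i, max 0 (ℓ i)

theorem localHeight_zero : localHeight (0 : ι → ℝ) = 0 := by
  simp [localHeight]

theorem localHeight_smul {c : ℝ} (hc : 0 ≤ c) (ℓ : ι → ℝ) :
    localHeight (c • ℓ) = c * localHeight ℓ := by
  simp [localHeight, Real.mul_iSup_of_nonneg hc, mul_max_of_nonneg _ _ hc]

theorem continuous_localHeight [Fintype ι] : Continuous (localHeight (ι := ι)) := by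
  change Continuous fun ℓ : ι → ℝ => ⨆ i, max 0 (ℓ i)
  cases isEmpty_or_nonempty ι
  · simp only [Real.iSup_of_isEmpty]
    exact continuous_const
  · simp only [← Finset.sup'_univ_eq_ciSup]
    exact Continuous.finset_sup'_apply _ fun i _ => continuous_const.max (continuous_apply i)

theorem localHeight_fin_two (ℓ : Fin 2 → ℝ) : localHeight ℓ = max 0 (max (ℓ 0) (ℓ 1)) := by
  rw [localHeight, ← Finset.sup'_univ_eq_ciSup]
  simp [Fin.univ_succ, max_max_max_comm]

end LocalHeight

section Places

variable {K : Type*} [Field K] [NumberField K]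

theorem finVal_eq_log_valuation (v : HeightOneSpectrum (𝓞 K)) (a : K) :
    finVal K v a =
      ((WithZero.log (v.valuation K a) : ℤ) : ℝ) * Real.log (Ideal.absNorm v.asIdeal) := by
  rw [finVal]
  split_ifs with ha
  · simp [ha]
  · rw [WithZero.toAdd_unzero_eq_log]

def finValHom (v : HeightOneSpectrum (𝓞 K)) : Additive Kˣ →+ ℝ :=
  AddMonoidHom.mk' (fun a => finVal K v (a.toMul : K)) fun a b => by
    simp only [finVal_eq_log_valuation, toMul_add, Units.val_mul, map_mul,
      WithZero.log_mul ((v.valuation K).ne_zero_iff.mpr a.toMul.ne_zero)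
        ((v.valuation K).ne_zero_iff.mpr b.toMul.ne_zero)]
    push_cast
    ring

def logPlaceHom (w : InfinitePlace K) : Additive Kˣ →+ ℝ :=
  AddMonoidHom.mk' (fun a => Real.log (w (a.toMul : K))) fun a b => by
    simp only [toMul_add, Units.val_mul, map_mul]
    exact Real.log_mul ((map_ne_zero w).mpr a.toMul.ne_zero) ((map_ne_zero w).mpr b.toMul.ne_zero)

theorem finite_setOf_finVal_ne_zero (a : Kˣ) :
    {v : HeightOneSpectrum (𝓞 K) | finVal K v a ≠ 0}.Finite := by
  refine ((HeightOneSpectrum.Support.finite (𝓞 K) (a : K)).union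
    (HeightOneSpectrum.Support.finite (𝓞 K) ((a⁻¹ : Kˣ) : K))).subset fun v hv => ?_
  contrapose! hv
  simp only [Set.mem_union, HeightOneSpectrum.Support, Set.mem_ofPred_eq, not_or, not_lt,
    Units.val_inv_eq_inv_val, map_inv₀] at hv
  have hpos : 0 < v.valuation K a := zero_lt_iff.mpr ((v.valuation K).ne_zero_iff.mpr a.ne_zero)
  have hv1 : v.valuation K a = 1 := le_antisymm hv.1 ((inv_le_one₀ hpos).mp hv.2)
  simp [finVal_eq_log_valuation, hv1]

end Places

-- `matrixHeight K 1 x = uHeight K x`, and for `M = lim A^n / λ^n` this is the canonical height.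
def matrixHeight (K : Type*) [Field K] [NumberField K] {N : ℕ} (M : Matrix (Fin N) (Fin N) ℝ)
    (x : Fin N → Kˣ) : ℝ :=
  (Module.finrank ℚ K : ℝ)⁻¹ *
    ((∑ w : InfinitePlace K, (w.mult : ℝ) * localHeight (M *ᵥ fun i => Real.log (w (x i : K)))) +
     ∑ᶠ v : HeightOneSpectrum (𝓞 K), localHeight (M *ᵥ fun i => finVal K v (x i : K)))

section MatrixHeight

variable {K : Type*} [Field K] [NumberField K] {N : ℕ}

theorem uHeight_phi (A : Matrix (Fin N) (Fin N) ℤ) (x : Fin N → Kˣ) :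
    uHeight K (phi A x) = matrixHeight K (A.map (Int.cast : ℤ → ℝ)) x := by
  simp only [uHeight, logHeight, matrixHeight]
  congr 2
  · refine Finset.sum_congr rfl fun w _ => ?_
    exact congrArg (_ * localHeight ·) (map_phi (logPlaceHom w) A x)
  · exact finsum_congr fun v => congrArg localHeight (map_phi (finValHom v) A x)

theorem matrixHeight_smul {c : ℝ} (hc : 0 ≤ c) (M : Matrix (Fin N) (Fin N) ℝ) (x : Fin N → Kˣ) :
    matrixHeight K (c • M) x = c * matrixHeight K M x := by
  simp only [matrixHeight, smul_mulVec, localHeight_smul hc, mul_left_comm _ c, mul_add,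
    Finset.mul_sum, mul_finsum]

theorem continuous_matrixHeight (x : Fin N → Kˣ) :
    Continuous fun M : Matrix (Fin N) (Fin N) ℝ => matrixHeight K M x := by
  have hT : (⋃ j, {v : HeightOneSpectrum (𝓞 K) | finVal K v (x j) ≠ 0}).Finite :=
    Set.finite_iUnion fun j => finite_setOf_finVal_ne_zero (x j)
  have hsupp (M : Matrix (Fin N) (Fin N) ℝ) :
      (Function.support fun v : HeightOneSpectrum (𝓞 K) =>
        localHeight (M *ᵥ fun i => finVal K v (x i : K))) ⊆ hT.toFinset := by
    intro v hv
    contrapose! hv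
    simp only [Set.Finite.coe_toFinset, Set.mem_iUnion, Set.mem_ofPred_eq, not_exists,
      not_not] at hv
    rw [Function.notMem_support, show (fun i => finVal K v (x i : K)) = 0 from funext hv,
      mulVec_zero, localHeight_zero]
  simp only [matrixHeight, finsum_eq_sum_of_support_subset _ (hsupp _)]
  have hlocal (ℓ : Fin N → ℝ) :
      Continuous fun M : Matrix (Fin N) (Fin N) ℝ => localHeight (M *ᵥ ℓ) :=
    continuous_localHeight.comp (continuous_id.matrix_mulVec continuous_const)
  fun_prop

theorem tendsto_uHeight_iterate_phi_div (A : Matrix (Fin N) (Fin N) ℤ) {c : ℝ} (hc : 0 < c)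
    {P : Matrix (Fin N) (Fin N) ℝ}
    (hA : Tendsto (fun n : ℕ => (c ^ n)⁻¹ • (A ^ n).map (Int.cast : ℤ → ℝ)) atTop (𝓝 P))
    (x : Fin N → Kˣ) :
    Tendsto (fun n : ℕ => uHeight K ((phi A)^[n] x) / c ^ n) atTop (𝓝 (matrixHeight K P x)) := by
  have hnorm (n : ℕ) : uHeight K ((phi A)^[n] x) / c ^ n
      = matrixHeight K ((c ^ n)⁻¹ • (A ^ n).map (Int.cast : ℤ → ℝ)) x := by
    rw [iterate_phi, uHeight_phi, matrixHeight_smul (by positivity), div_eq_inv_mul]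
  simpa only [hnorm, Function.comp_def] using ((continuous_matrixHeight x).tendsto P).comp hA

end MatrixHeight

def fibMatrix : Matrix (Fin 2) (Fin 2) ℤ := !![1, 1; 1, 0]

theorem fibMatrix_pow (n : ℕ) :
    fibMatrix ^ n = of fun i j : Fin 2 => Int.fib (n + 1 - i - j) := by
  induction n with
  | zero => ext i j; fin_cases i <;> fin_cases j <;> rfl
  | succ n ih =>
    ext i j
    have h1 : Int.fib (n + 1 + 1) = Int.fib (n + 1) + Int.fib n := by
      rw [add_assoc, one_add_one_eq_two, Int.fib_add_two, add_comm]
    have h2 : Int.fib (n + 1) = Int.fib n + Int.fib (n - 1) := by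
      rw [← sub_add_cancel (n : ℤ) 1, add_sub_cancel_right, add_assoc, one_add_one_eq_two,
        Int.fib_add_two, add_comm]
    rw [pow_succ, ih]
    fin_cases i <;> fin_cases j <;>
      simp [fibMatrix, Matrix.mul_apply, Fin.sum_univ_two, -Int.fib_natCast, h1, h2]

theorem tendsto_intFib_add_div_goldenRatio_pow (j : ℤ) :
    Tendsto (fun n : ℕ => (Int.fib (n + j) : ℝ) / φ ^ n) atTop (𝓝 (φ ^ j / √5)) := by
  have hratio : |ψ / φ| < 1 := by
    rw [abs_div, abs_of_pos goldenRatio_pos, div_lt_one goldenRatio_pos, abs_of_neg goldenConj_neg]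
    linarith [neg_one_lt_goldenConj, one_lt_goldenRatio]
  have hform (n : ℕ) : (Int.fib (n + j) : ℝ) / φ ^ n = (φ ^ j - ψ ^ j * (ψ / φ) ^ n) / √5 := by
    rw [coe_intFib_eq, zpow_add₀ goldenRatio_ne_zero, zpow_add₀ goldenConj_ne_zero, zpow_natCast,
      zpow_natCast]
    have hφ := goldenRatio_ne_zero
    generalize φ = g at hφ ⊢
    generalize ψ = c
    rw [div_pow]
    field_simp
  simp only [hform]
  have := (tendsto_pow_atTop_nhds_zero_of_abs_lt_one hratio).const_mul (ψ ^ j)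
  simpa using (this.const_sub (φ ^ j)).div_const √5

def goldenProjection : Matrix (Fin 2) (Fin 2) ℝ := of fun i j => φ ^ (1 - i - j : ℤ) / √5

theorem tendsto_fibMatrix_pow_div :
    Tendsto (fun n : ℕ => (φ ^ n)⁻¹ • (fibMatrix ^ n).map (Int.cast : ℤ → ℝ)) atTop
      (𝓝 goldenProjection) := by
  refine tendsto_pi_nhds.mpr fun i => tendsto_pi_nhds.mpr fun j => ?_
  simp only [fibMatrix_pow, goldenProjection, Matrix.smul_apply, map_apply, of_apply, smul_eq_mul]
  simpa [add_sub_assoc, inv_mul_eq_div] using tendsto_intFib_add_div_goldenRatio_pow (1 - i - j)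

theorem localHeight_goldenProjection_mulVec (ℓ : Fin 2 → ℝ) :
    localHeight (goldenProjection *ᵥ ℓ) = (√5)⁻¹ * max 0 (φ * ℓ 0 + ℓ 1) := by
  set a := φ * ℓ 0 + ℓ 1
  have hrow : goldenProjection *ᵥ ℓ = (√5)⁻¹ • ![a, φ⁻¹ * a] := by
    ext i
    fin_cases i <;> simp [goldenProjection, mulVec, dotProduct, Fin.sum_univ_two, a] <;> field_simp
  have hφ : 0 < φ⁻¹ ∧ φ⁻¹ < 1 :=
    ⟨inv_pos.mpr goldenRatio_pos, inv_lt_one_of_one_lt₀ one_lt_goldenRatio⟩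
  rw [hrow, localHeight_smul (by positivity), localHeight_fin_two, cons_val_zero, cons_val_one,
    cons_val_fin_one]
  congr 1
  rcases le_total a 0 with ha | ha
  · rw [max_eq_left (max_le ha (mul_nonpos_of_nonneg_of_nonpos hφ.1.le ha)), max_eq_left ha]
  · rw [max_eq_left (mul_le_of_le_one_left ha hφ.2.le)]

theorem matrixHeight_goldenProjection {K : Type*} [Field K] [NumberField K] (x y : Kˣ) :
    matrixHeight K goldenProjection ![x, y]
      = (√5)⁻¹ * ((Module.finrank ℚ K : ℝ)⁻¹ *
        ((∑ w : InfinitePlace K, (w.mult : ℝ) *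
            max 0 (φ * Real.log (w (x : K)) + Real.log (w (y : K)))) +
         ∑ᶠ v : HeightOneSpectrum (𝓞 K), max 0 (φ * finVal K v (x : K) + finVal K v (y : K)))) := by
  simp only [matrixHeight, localHeight_goldenProjection_mulVec, mul_left_comm _ (√5)⁻¹, mul_add,
    Finset.mul_sum, mul_finsum]
  simp

/-- For A = (2 1; 1 1) with λ₁ = (3+√5)/2, the canonical height of P = (x,y) is
(1/√5) · Σ_{v ∈ M_K} max{0, ((√5+1)/2)·log‖x‖_v + log‖y‖_v}. -/
theorem statement2 (K : Type*) [Field K] [NumberField K] (x y : Kˣ) :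
    Filter.limsup
      (fun n : ℕ =>
        uHeight K ((phi (!![2, 1; 1, 1] : Matrix (Fin 2) (Fin 2) ℤ))^[n] ![x, y]) /
          ((3 + Real.sqrt 5) / 2) ^ n)
      Filter.atTop
    = (Real.sqrt 5)⁻¹ * ((Module.finrank ℚ K : ℝ)⁻¹ *
        ((∑ w : InfinitePlace K, (w.mult : ℝ) *
            max 0 (((Real.sqrt 5 + 1) / 2) * Real.log (w (x : K)) + Real.log (w (y : K)))) +
         ∑ᶠ v : HeightOneSpectrum (𝓞 K),
            max 0 (((Real.sqrt 5 + 1) / 2) * finVal K v (x : K) + finVal K v (y : K)))) := by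
  have hφ : (Real.sqrt 5 + 1) / 2 = φ := by rw [goldenRatio, add_comm]
  have hlam : (3 + Real.sqrt 5) / 2 = φ ^ 2 := by rw [goldenRatio_sq, ← hφ]; ring
  have hA : (!![2, 1; 1, 1] : Matrix (Fin 2) (Fin 2) ℤ) = fibMatrix ^ 2 := by
    ext i j; fin_cases i <;> fin_cases j <;> rfl
  have hlim : Tendsto (fun n : ℕ => (((3 + Real.sqrt 5) / 2) ^ n)⁻¹ •
      ((!![2, 1; 1, 1] : Matrix (Fin 2) (Fin 2) ℤ) ^ n).map (Int.cast : ℤ → ℝ)) atTop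
      (𝓝 goldenProjection) := by
    simpa only [hlam, hA, ← pow_mul, Function.comp_def] using
      tendsto_fibMatrix_pow_div.comp (strictMono_mul_left_of_pos two_pos).tendsto_atTop
  rw [(tendsto_uHeight_iterate_phi_div _ (by positivity) hlim _).limsup_eq,
    matrixHeight_goldenProjection, hφ]
end
end

section
/- Let A ∈ Mat_N(ℤ) be diagonalizable over ℂ with nonzero determinant, and suppose all eigenvalues of A have the same modulus |λ| = ρ(A). Then there exists a strictly increasing sequence of positive integers (n_r) such that A^{n_r}/|λ|^{n_r} → I_N as r → ∞. -/
/-!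
Since `det A ≠ 0`, no `λᵢ` vanishes, so `r ≠ 0` and `A ^ n / r ^ n = B · diag((λᵢ / r) ^ n) · B⁻¹`
with every `λᵢ / r` on the unit circle. In the compact group `(S¹)ᴺ` the powers of any element
return arbitrarily close to `1` infinitely often, which gives the subsequence.
-/

open Filter Topology Matrix

theorem exists_strictMono_pos_tendsto_pow_one {G : Type*} [Group G] [TopologicalSpace G]
    [CompactSpace G] [IsTopologicalGroup G] [FirstCountableTopology G] (x : G) :
    ∃ n : ℕ → ℕ, StrictMono n ∧ (∀ k, 0 < n k) ∧ Tendsto (fun k => x ^ n k) atTop (𝓝 1) := by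
  obtain ⟨ψ, hψ, hlim⟩ := (mapClusterPt_one_atTop_pow x).tendsto_subseq
  exact ⟨fun k => ψ (k + 1), hψ.comp (strictMono_id.add_const 1),
    fun k => (Nat.succ_pos k).trans_le (hψ.id_le _), hlim.comp (tendsto_add_atTop_nat 1)⟩

theorem exists_strictMono_pos_tendsto_pow_of_norm_eq_one {ι : Type*} [Finite ι] (w : ι → ℂ)
    (hw : ∀ i, ‖w i‖ = 1) :
    ∃ n : ℕ → ℕ, StrictMono n ∧ (∀ k, 0 < n k) ∧
      Tendsto (fun k i => w i ^ n k) atTop (𝓝 1) := by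
  let z : ι → Circle := fun i => ⟨w i, mem_sphere_zero_iff_norm.2 (hw i)⟩
  obtain ⟨n, hmono, hpos, hlim⟩ := exists_strictMono_pos_tendsto_pow_one z
  have hcoe : Continuous fun f : ι → Circle => fun i => (f i : ℂ) :=
    continuous_pi fun i => continuous_subtype_val.comp (continuous_apply i)
  exact ⟨n, hmono, hpos, (hcoe.tendsto 1).comp hlim⟩

namespace Matrix

theorem conj_pow {n R : Type*} [Fintype n] [DecidableEq n] [CommRing R] {B : Matrix n n R}
    (hB : IsUnit B.det) (D : Matrix n n R) (k : ℕ) : (B * D * B⁻¹) ^ k = B * D ^ k * B⁻¹ := by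
  obtain ⟨u, rfl⟩ := (isUnit_iff_isUnit_det B).2 hB
  simpa only [coe_units_inv] using Units.conj_pow u D k

variable {n 𝕜 : Type*} [Fintype n] [DecidableEq n] [Field 𝕜] {B : Matrix n n 𝕜}

theorem inv_pow_smul_conj_diagonal_pow (hB : IsUnit B.det) (d : n → 𝕜) (c : 𝕜) (k : ℕ) :
    (c ^ k)⁻¹ • (B * diagonal d * B⁻¹) ^ k = B * diagonal (fun i => (d i / c) ^ k) * B⁻¹ := by
  rw [conj_pow hB, diagonal_pow, ← smul_mul_assoc, ← mul_smul_comm, ← diagonal_smul]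
  congr 3
  ext i
  simp [div_eq_inv_mul, mul_pow, inv_pow]

theorem ne_zero_of_det_conj_diagonal_ne_zero (hB : IsUnit B.det) {d : n → 𝕜}
    (h : (B * diagonal d * B⁻¹).det ≠ 0) (i : n) : d i ≠ 0 := by
  rw [det_conj ((isUnit_iff_isUnit_det B).2 hB), det_diagonal] at h
  exact Finset.prod_ne_zero_iff.1 h i (Finset.mem_univ i)

theorem tendsto_conj_diagonal_one [TopologicalSpace 𝕜] [IsTopologicalRing 𝕜] {ι : Type*}
    (hB : IsUnit B.det) {l : Filter ι} {d : ι → n → 𝕜} (hd : Tendsto d l (𝓝 1)) :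
    Tendsto (fun k => B * diagonal (d k) * B⁻¹) l (𝓝 1) := by
  have hcont : Continuous fun e : n → 𝕜 => B * diagonal e * B⁻¹ :=
    (continuous_const.matrix_mul continuous_id.matrix_diagonal).matrix_mul continuous_const
  have hone : B * diagonal (1 : n → 𝕜) * B⁻¹ = 1 := by
    rw [Pi.one_def, diagonal_one, Matrix.mul_one, mul_nonsing_inv B hB]
  rw [← hone]
  exact (hcont.tendsto 1).comp hd

end Matrix

/-- If A ∈ Mat_N(ℤ) is diagonalizable over ℂ with nonzero determinant and all eigenvalues
of the same modulus r, then there is a strictly increasing sequence of positive integers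
n_r with A^{n_r}/r^{n_r} → I_N. -/
theorem statement11 {N : ℕ} (A : Matrix (Fin N) (Fin N) ℤ) (hA : A.det ≠ 0)
    (B : Matrix (Fin N) (Fin N) ℂ) (hB : IsUnit B.det) (lam : Fin N → ℂ) (r : ℝ)
    (hdiag : A.map (Int.cast : ℤ → ℂ) = B * Matrix.diagonal lam * B⁻¹)
    (hmod : ∀ i, ‖lam i‖ = r) :
    ∃ n : ℕ → ℕ, StrictMono n ∧ (∀ k, 0 < n k) ∧
      Filter.Tendsto (fun k => (r ^ n k)⁻¹ • (A ^ n k).map (Int.cast : ℤ → ℂ))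
        Filter.atTop (nhds 1) := by
  have hdet : (B * diagonal lam * B⁻¹).det ≠ 0 := by
    rw [← hdiag, ← Int.cast_det]
    exact_mod_cast hA
  have hnorm : ∀ i, ‖lam i / r‖ = 1 := fun i => by
    have hr : r ≠ 0 :=
      hmod i ▸ norm_ne_zero_iff.2 (ne_zero_of_det_conj_diagonal_ne_zero hB hdet i)
    rw [norm_div, hmod, Complex.norm_real, Real.norm_of_nonneg (hmod i ▸ norm_nonneg _),
      div_self hr]
  obtain ⟨n, hmono, hpos, hlim⟩ := exists_strictMono_pos_tendsto_pow_of_norm_eq_one _ hnorm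
  have hscaled : ∀ k, (r ^ n k)⁻¹ • (A ^ n k).map (Int.cast : ℤ → ℂ) =
      B * diagonal (fun i => (lam i / r) ^ n k) * B⁻¹ := fun k => by
    rw [← inv_pow_smul_conj_diagonal_pow hB, ← hdiag, ← Complex.coe_smul,
      Complex.ofReal_inv, Complex.ofReal_pow]
    exact congrArg _ (A.map_pow (Int.castRingHom ℂ) (n k))
  exact ⟨n, hmono, hpos, by simpa only [hscaled] using tendsto_conj_diagonal_one hB hlim⟩
end

section
/- Let A be the matrix (2 1; 0 2) and φ_A(x,y) = (x²y, y²) the associated monomial map on 𝔾_m^2(ℚ̄). Then for all P = (x,y), ĥ_A⁺(P) = limsup_{n→∞} h(φ_A^n(P))/(n·2^n) = h(y)/2. In particular the Northcott finiteness property fails: there are infinitely many P ∈ 𝔾_m^2(ℚ) with ĥ_A⁺(P) = 0. -/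
open Filter NumberField IsDedekindDomain
open scoped Classical

noncomputable section

/-!
Write `h(x) = Σ_v log⁺ |x|_v` over all places of `K`. Each `log |·|_v` is a homomorphism
`Kˣ → ℝ`, and `φ_A^[n+1] (x, y) = (x ^ 2^(n+1) * y ^ ((n+1) 2^n), y ^ 2^(n+1))`. Bounding
`log⁺` of a product by the sum of the `log⁺`, the height of this point lies between
`(n+1) 2^n h(y) - 2^(n+1) h(x⁻¹)` and `(n+1) 2^n h(y) + 2^(n+1) (h(x) + h(y))`, so after
dividing by `n 2^n` it converges to `h(y) / 2`, which is `0` for the points `(x, 1)`.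
-/

open Topology

lemma finsum_sum_type {α β M : Type*} [AddCommMonoid M] {f : α ⊕ β → M}
    (hf : f.HasFiniteSupport) :
    ∑ᶠ x, f x = ∑ᶠ a, f (.inl a) + ∑ᶠ b, f (.inr b) := by
  rw [← finsum_mem_univ, ← Set.range_inl_union_range_inr,
    finsum_mem_union' Set.isCompl_range_inl_range_inr.disjoint (hf.inter_of_right _)
      (hf.inter_of_right _), finsum_mem_range Sum.inl_injective,
    finsum_mem_range Sum.inr_injective]

section PlaceSum

variable {ι G : Type*}

def placeSum (ℓ : ι → G → ℝ) {N : ℕ} (x : Fin N → G) : ℝ :=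
  ∑ᶠ i, ⨆ j, max 0 (ℓ i (x j))

lemma placeSum_single (ℓ : ι → G → ℝ) (a : G) :
    placeSum ℓ ![a] = ∑ᶠ i, max 0 (ℓ i a) := by
  simp [placeSum, ciSup_unique]

variable [CommGroup G]

structure IsLogAbsFamily (ℓ : ι → G → ℝ) : Prop where
  map_mul : ∀ i a b, ℓ i (a * b) = ℓ i a + ℓ i b
  hasFiniteSupport : ∀ a, (fun i => ℓ i a).HasFiniteSupport

namespace IsLogAbsFamily

variable {ℓ : ι → G → ℝ}

lemma map_one (hℓ : IsLogAbsFamily ℓ) (i : ι) : ℓ i 1 = 0 := by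
  simpa using hℓ.map_mul i 1 1

lemma map_inv (hℓ : IsLogAbsFamily ℓ) (i : ι) (a : G) : ℓ i a⁻¹ = -ℓ i a := by
  linarith [hℓ.map_mul i a a⁻¹, mul_inv_cancel a ▸ hℓ.map_one i]

lemma map_pow (hℓ : IsLogAbsFamily ℓ) (i : ι) (a : G) (m : ℕ) :
    ℓ i (a ^ m) = m * ℓ i a := by
  induction m with
  | zero => simp [hℓ.map_one]
  | succ m ih => rw [pow_succ, hℓ.map_mul, ih]; push_cast; ring

lemma hasFiniteSupport_iSup (hℓ : IsLogAbsFamily ℓ) {N : ℕ} (x : Fin N → G) :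
    (fun i => ⨆ j, max 0 (ℓ i (x j))).HasFiniteSupport := by
  cases N with
  | zero => simp [Function.HasFiniteSupport]
  | succ N =>
    have := hℓ.hasFiniteSupport
    fun_prop

end IsLogAbsFamily

variable {ℓ : ι → G → ℝ}

lemma placeSum_single_one (hℓ : IsLogAbsFamily ℓ) : placeSum ℓ ![(1 : G)] = 0 := by
  simp [placeSum_single, hℓ.map_one]

lemma placeSum_single_pow (hℓ : IsLogAbsFamily ℓ) (a : G) (m : ℕ) :
    placeSum ℓ ![a ^ m] = m * placeSum ℓ ![a] := by
  simp only [placeSum_single, hℓ.map_pow, mul_finsum, mul_max_of_nonneg _ _ m.cast_nonneg,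
    mul_zero]

lemma placeSum_pair_mul_le (hℓ : IsLogAbsFamily ℓ) (a b c : G) :
    placeSum ℓ ![a * b, c] ≤ placeSum ℓ ![a] + placeSum ℓ ![b] + placeSum ℓ ![c] := by
  have := hℓ.hasFiniteSupport
  simp only [placeSum_single]
  rw [← finsum_add_distrib (by fun_prop) (by fun_prop),
    ← finsum_add_distrib (by fun_prop) (by fun_prop)]
  refine finsum_le_finsum' (hℓ.hasFiniteSupport_iSup _) (by fun_prop) fun i =>
    ciSup_le (Fin.forall_fin_two.2 ⟨?_, ?_⟩)
  · simp only [Matrix.cons_val_zero, hℓ.map_mul]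
    grind
  · simp only [Matrix.cons_val_one, Matrix.cons_val_fin_one]
    grind

lemma placeSum_single_le_pair_mul (hℓ : IsLogAbsFamily ℓ) (a b c : G) :
    placeSum ℓ ![b] ≤ placeSum ℓ ![a * b, c] + placeSum ℓ ![a⁻¹] := by
  have := hℓ.hasFiniteSupport
  rw [placeSum_single, placeSum_single, placeSum,
    ← finsum_add_distrib (hℓ.hasFiniteSupport_iSup _) (by fun_prop)]
  refine finsum_le_finsum' (by fun_prop) (by fun_prop) fun i => ?_
  -- `b = a⁻¹ * (a * b)`
  have := Finite.le_ciSup_of_le (f := fun j => max 0 (ℓ i (![a * b, c] j))) 0 le_rfl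
  simp only [Matrix.cons_val_zero, hℓ.map_mul, hℓ.map_inv] at this ⊢
  grind

end PlaceSum

local notation "A₂" => (!![2, 1; 0, 2] : Matrix (Fin 2) (Fin 2) ℤ)

lemma phi_A₂ {G : Type*} [CommGroup G] (P : Fin 2 → G) :
    phi A₂ P = ![P 0 ^ 2 * P 1, P 1 ^ 2] := by
  ext i
  fin_cases i <;> simp [phi, Fin.prod_univ_two]

lemma phi_A₂_iterate_succ {G : Type*} [CommGroup G] (P : Fin 2 → G) (n : ℕ) :
    (phi A₂)^[n + 1] P = ![P 0 ^ 2 ^ (n + 1) * P 1 ^ ((n + 1) * 2 ^ n), P 1 ^ 2 ^ (n + 1)] := by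
  induction n with
  | zero => simp [phi_A₂]
  | succ n ih =>
    rw [Function.iterate_succ_apply', ih, phi_A₂]
    simp only [Matrix.cons_val_zero, Matrix.cons_val_one, Matrix.cons_val_fin_one, mul_pow,
      ← pow_mul, mul_assoc, ← pow_add]
    congr 4
    ring

lemma tendsto_div_succ_mul_two_pow {u : ℕ → ℝ} {c A B : ℝ}
    (hlow : ∀ n : ℕ, (n + 1) * 2 ^ n * c - A * 2 ^ n ≤ u n)
    (hup : ∀ n : ℕ, u n ≤ (n + 1) * 2 ^ n * c + B * 2 ^ n) :
    Tendsto (fun n : ℕ => u n / ((n + 1) * 2 ^ (n + 1))) atTop (𝓝 (c / 2)) := by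
  have hinv := tendsto_one_div_add_atTop_nhds_zero_nat (𝕜 := ℝ)
  have key (n : ℕ) (C : ℝ) : ((n + 1) * 2 ^ n * c + C * 2 ^ n) / ((n + 1) * 2 ^ (n + 1))
      = c / 2 + C / 2 * (1 / ((n : ℝ) + 1)) := by
    field_simp
    ring
  have hlim (C : ℝ) :
      Tendsto (fun n : ℕ => c / 2 + C / 2 * (1 / ((n : ℝ) + 1))) atTop (𝓝 (c / 2)) := by
    simpa using (hinv.const_mul (C / 2)).const_add (c / 2)
  refine tendsto_of_tendsto_of_tendsto_of_le_of_le (hlim (-A)) (hlim B) (fun n => ?_) fun n => ?_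
  · dsimp only
    rw [← key]
    gcongr
    linarith [hlow n]
  · dsimp only
    rw [← key]
    gcongr
    exact hup n

theorem tendsto_placeSum_phi_A₂_iterate {ι G : Type*} [CommGroup G] {ℓ : ι → G → ℝ}
    (hℓ : IsLogAbsFamily ℓ) (P : Fin 2 → G) :
    Tendsto (fun n : ℕ => placeSum ℓ ((phi A₂)^[n] P) / (n * 2 ^ n)) atTop
      (𝓝 (placeSum ℓ ![P 1] / 2)) := by
  rw [← tendsto_add_atTop_iff_nat 1]
  push_cast
  refine tendsto_div_succ_mul_two_pow (A := 2 * placeSum ℓ ![(P 0)⁻¹])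
    (B := 2 * (placeSum ℓ ![P 0] + placeSum ℓ ![P 1])) (fun n => ?_) (fun n => ?_) <;>
    rw [phi_A₂_iterate_succ]
  · have := placeSum_single_le_pair_mul hℓ (P 0 ^ 2 ^ (n + 1)) (P 1 ^ ((n + 1) * 2 ^ n))
      (P 1 ^ 2 ^ (n + 1))
    rw [← inv_pow, placeSum_single_pow hℓ, placeSum_single_pow hℓ] at this
    push_cast [pow_succ (2 : ℝ)] at this
    linarith
  · have := placeSum_pair_mul_le hℓ (P 0 ^ 2 ^ (n + 1)) (P 1 ^ ((n + 1) * 2 ^ n))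
      (P 1 ^ 2 ^ (n + 1))
    rw [placeSum_single_pow hℓ, placeSum_single_pow hℓ, placeSum_single_pow hℓ] at this
    push_cast [pow_succ (2 : ℝ)] at this
    linarith

section NumberField

variable {K : Type*} [Field K] [NumberField K]

lemma finVal_eq (v : HeightOneSpectrum (𝓞 K)) {a : K} (ha : a ≠ 0) :
    finVal K v a = WithZero.log (v.valuation K a) * Real.log (Ideal.absNorm v.asIdeal) := by
  rw [finVal, dif_neg ha, WithZero.toAdd_unzero_eq_log]

lemma finVal_mul (v : HeightOneSpectrum (𝓞 K)) {a b : K} (ha : a ≠ 0) (hb : b ≠ 0) :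
    finVal K v (a * b) = finVal K v a + finVal K v b := by
  rw [finVal_eq v (mul_ne_zero ha hb), finVal_eq v ha, finVal_eq v hb, map_mul,
    WithZero.log_mul (by simpa) (by simpa)]
  push_cast
  ring

lemma hasFiniteSupport_finVal {a : K} (ha : a ≠ 0) :
    (fun v : HeightOneSpectrum (𝓞 K) => finVal K v a).HasFiniteSupport := by
  refine ((HeightOneSpectrum.Support.finite (𝓞 K) a).union
    (HeightOneSpectrum.Support.finite (𝓞 K) a⁻¹)).subset fun v hv => ?_
  contrapose! hv
  simp only [HeightOneSpectrum.Support, Set.mem_union, Set.mem_ofPred_eq, not_or, not_lt,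
    map_inv₀] at hv
  have : v.valuation K a = 1 := le_antisymm hv.1 ((inv_le_one₀ (zero_lt_iff.2 (by simpa))).1 hv.2)
  simp [finVal_eq v ha, this]

variable (K) in
def logAbs : InfinitePlace K ⊕ HeightOneSpectrum (𝓞 K) → Kˣ → ℝ :=
  Sum.elim (fun w a => w.mult * Real.log (w a)) (fun v a => finVal K v a)

lemma isLogAbsFamily_logAbs : IsLogAbsFamily (logAbs K) where
  map_mul
    | .inl w, a, b => by
      simp only [logAbs, Sum.elim_inl, Units.val_mul, map_mul,
        Real.log_mul (w.pos_iff.2 a.ne_zero).ne' (w.pos_iff.2 b.ne_zero).ne']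
      ring
    | .inr v, a, b => finVal_mul v a.ne_zero b.ne_zero
  hasFiniteSupport a :=
    Set.finite_preimage_inl_and_inr.1 ⟨Set.toFinite _, hasFiniteSupport_finVal a.ne_zero⟩

lemma uHeight_eq_placeSum {N : ℕ} (x : Fin N → Kˣ) :
    uHeight K x = (Module.finrank ℚ K : ℝ)⁻¹ * placeSum (logAbs K) x := by
  rw [uHeight, logHeight, placeSum,
    finsum_sum_type (isLogAbsFamily_logAbs.hasFiniteSupport_iSup x), ← finsum_eq_sum_of_fintype]
  simp only [logAbs, Sum.elim_inl, Sum.elim_inr, Real.mul_iSup_of_nonneg (Nat.cast_nonneg _),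
    mul_max_of_nonneg _ _ (Nat.cast_nonneg _), mul_zero]

theorem tendsto_uHeight_phi_A₂_iterate (P : Fin 2 → Kˣ) :
    Tendsto (fun n : ℕ => uHeight K ((phi A₂)^[n] P) / (n * 2 ^ n)) atTop
      (𝓝 (uHeight K ![P 1] / 2)) := by
  simp only [uHeight_eq_placeSum, mul_div_assoc]
  exact (tendsto_placeSum_phi_A₂_iterate isLogAbsFamily_logAbs P).const_mul _

end NumberField

/-- For A = (2 1; 0 2), ĥ_A⁺(P) = limsup h(φ_A^n(P))/(n·2ⁿ) = h(y)/2 for P = (x,y).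
In particular Northcott fails: infinitely many P ∈ 𝔾_m²(ℚ) have ĥ_A⁺(P) = 0. -/
theorem statement19 :
    (∀ (K : Type) [Field K] [NumberField K] (P : Fin 2 → Kˣ),
      Filter.limsup
        (fun n : ℕ =>
          uHeight K ((phi (!![2, 1; 0, 2] : Matrix (Fin 2) (Fin 2) ℤ))^[n] P) /
            ((n : ℝ) * 2 ^ n))
        Filter.atTop
      = uHeight K ![P 1] / 2) ∧
    {P : Fin 2 → ℚˣ |
      Filter.limsup
        (fun n : ℕ =>
          uHeight ℚ ((phi (!![2, 1; 0, 2] : Matrix (Fin 2) (Fin 2) ℤ))^[n] P) /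
            ((n : ℝ) * 2 ^ n))
        Filter.atTop = 0}.Infinite := by
  refine ⟨fun K _ _ P => (tendsto_uHeight_phi_A₂_iterate P).limsup_eq, ?_⟩
  refine Set.infinite_of_injective_forall_mem
    (f := fun k : ℕ => ![Units.mk0 ((k : ℚ) + 1) k.cast_add_one_ne_zero, 1])
    (fun k l hkl => ?_) fun k => ?_
  · simpa using congrArg (fun P => ((P 0 : ℚˣ) : ℚ)) hkl
  · rw [Set.mem_ofPred_eq, (tendsto_uHeight_phi_A₂_iterate _).limsup_eq]
    simp [uHeight_eq_placeSum, placeSum_single_one isLogAbsFamily_logAbs]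
end
end
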